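/- Let (J, cl) be a finite convex 4-geometry with set of rooted triangles RT. Then the following are equivalent: (i) (J, cl) has a realization; (ii) there exists an injective map f : J → ℝ² whose image is in general position such that for all distinct a, b, c, d ∈ J: ({a,b,c}, d) ∈ RT if and only if sign(f a, f b, f c) = sign(f d, f b, f c) = sign(f a, f d, f c) = sign(f a, f b, f d). -/

import Mathlib

open Set

/-- Orientation sign of a triple of points in the plane: the sign of the determinant of
the matrix with columns `y - x` and `z - x`. -/
noncomputable def osign (x y z : Fin 2 → ℝ) : ℝ :=
  Real.sign ((y 0 - x 0) * (z 1 - x 1) - (y 1 - x 1) * (z 0 - x 0))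

/-- A planar point set is in general position if no three distinct points are collinear. -/
def GenPos (X : Set (Fin 2 → ℝ)) : Prop :=
  ∀ x ∈ X, ∀ y ∈ X, ∀ z ∈ X, x ≠ y → y ≠ z → x ≠ z →
    ¬ Collinear ℝ ({x, y, z} : Set (Fin 2 → ℝ))

/-- A convex geometry on a finite set `J`: a closure operator satisfying the
anti-exchange axiom. -/
structure ConvexGeometry (J : Type) [Fintype J] where
  cl : Set J → Set J
  extensive : ∀ A : Set J, A ⊆ cl A
  mono : ∀ A B : Set J, A ⊆ B → cl A ⊆ cl B
  idem : ∀ A : Set J, cl (cl A) = cl A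
  antiExchange : ∀ A : Set J, cl A = A → ∀ x y : J, x ≠ y → x ∉ A → y ∉ A →
    x ∈ cl (A ∪ {y}) → y ∉ cl (A ∪ {x})

variable {J : Type} [Fintype J]

/-- A set is dependent if some element lies in the closure of the rest. -/
def ConvexGeometry.Dependent (G : ConvexGeometry J) (D : Set J) : Prop :=
  ∃ x ∈ D, x ∈ G.cl (D \ {x})

/-- A circuit is an inclusion-minimal dependent set. -/
def ConvexGeometry.IsCircuit (G : ConvexGeometry J) (C : Set J) : Prop :=
  G.Dependent C ∧ ∀ D ⊆ C, G.Dependent D → D = C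

/-- A convex 4-geometry: all circuits have exactly 4 elements. -/
def ConvexGeometry.Is4Geometry (G : ConvexGeometry J) : Prop :=
  ∀ C : Set J, G.IsCircuit C → C.ncard = 4

/-- `(T, a)` is a rooted triangle of `G` if `T ∪ {a}` is a circuit with root `a`. -/
def ConvexGeometry.RT (G : ConvexGeometry J) (T : Set J) (a : J) : Prop :=
  a ∉ T ∧ G.IsCircuit (insert a T) ∧ a ∈ G.cl T

/-- A realization of a convex geometry in the plane. -/
def IsRealization (G : ConvexGeometry J) (f : J → (Fin 2 → ℝ)) : Prop :=
  Function.Injective f ∧ GenPos (Set.range f) ∧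
    ∀ Y : Set J, f '' (G.cl Y) = convexHull ℝ (f '' Y) ∩ Set.range f

/-- `G.rest n` is the set `Jₙ` remaining after removing the first `n` layers. -/
def ConvexGeometry.rest (G : ConvexGeometry J) : ℕ → Set J
  | 0 => Set.univ
  | n + 1 => {x ∈ G.rest n | x ∈ G.cl (G.rest n \ {x})}

/-- The `n`-th layer: the extreme points of the restricted geometry on `G.rest n`. -/
def ConvexGeometry.layer (G : ConvexGeometry J) (n : ℕ) : Set J :=
  {x ∈ G.rest n | x ∉ G.cl (G.rest n \ {x})}

/-!
For an injective `f` with image in general position, being a realization is decided by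
triangles alone, on both sides.

In the plane, Carathéodory's theorem and general position put a point of `f '' J \ f '' Y`
lying in `convexHull (f '' Y)` inside a triangle with vertices in `f '' Y`; membership in a
triangle is read off from orientation signs through barycentric coordinates (Cramer's rule).

In the geometry, a minimal `Y` with `x ∈ cl Y` makes `Y ∪ {x}` a circuit (anti-exchange forbids
any root other than `x`), so in a 4-geometry `Y` is a triple; hence `cl Y` is `Y` together with
the closures of its triples, and for distinct `a b c d`, `d ∈ cl {a, b, c}` is exactly the
rooted triangle `({a, b, c}, d)`.
-/

/-- Twice the signed area of the triangle `x y z`. -/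
def orientDet (x y z : Fin 2 → ℝ) : ℝ :=
  (y 0 - x 0) * (z 1 - x 1) - (y 1 - x 1) * (z 0 - x 0)

lemma osign_eq_sign_orientDet (x y z : Fin 2 → ℝ) :
    osign x y z = Real.sign (orientDet x y z) :=
  rfl

lemma collinear_of_orientDet_eq_zero {x y z : Fin 2 → ℝ} (h : orientDet x y z = 0) :
    Collinear ℝ ({x, y, z} : Set (Fin 2 → ℝ)) := by
  rw [collinear_iff_not_affineIndependent_set]
  intro hind
  have hdet : (!![x 0, y 0, z 0; x 1, y 1, z 1; 1, 1, 1]).det = 0 := by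
    simp only [orientDet] at h
    simp [Matrix.det_fin_three]
    linear_combination h
  -- a kernel vector of this matrix is an affine dependence among `x`, `y`, `z`
  obtain ⟨v, hv, hMv⟩ := Matrix.exists_mulVec_eq_zero_iff.2 hdet
  have h₀ := congrFun hMv 0
  have h₁ := congrFun hMv 1
  have h₂ := congrFun hMv 2
  simp [Matrix.mulVec, dotProduct, Fin.sum_univ_three] at h₀ h₁ h₂
  refine hv (funext fun i => hind.eq_zero_of_sum_eq_zero (s := Finset.univ) ?_ ?_ i
    (Finset.mem_univ i))
  · simpa [Fin.sum_univ_three] using h₂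
  · funext j
    fin_cases j
    · simp [Fin.sum_univ_three]; linear_combination h₀
    · simp [Fin.sum_univ_three]; linear_combination h₁

lemma GenPos.orientDet_ne_zero {X : Set (Fin 2 → ℝ)} (hX : GenPos X) {x y z : Fin 2 → ℝ}
    (hx : x ∈ X) (hy : y ∈ X) (hz : z ∈ X) (hxy : x ≠ y) (hyz : y ≠ z) (hxz : x ≠ z) :
    orientDet x y z ≠ 0 :=
  fun h => hX x hx y hy z hz hxy hyz hxz (collinear_of_orientDet_eq_zero h)

lemma Real.sign_mul_of_pos {r x : ℝ} (hr : 0 < r) : Real.sign (r * x) = Real.sign x := by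
  rcases lt_trichotomy x 0 with hx | rfl | hx
  · rw [Real.sign_of_neg hx, Real.sign_of_neg (mul_neg_of_pos_of_neg hr hx)]
  · rw [mul_zero]
  · rw [Real.sign_of_pos hx, Real.sign_of_pos (mul_pos hr hx)]

lemma div_nonneg_of_sign_eq {x y : ℝ} (h : Real.sign x = Real.sign y) : 0 ≤ y / x := by
  rcases lt_trichotomy x 0 with hx | hx | hx <;> rcases lt_trichotomy y 0 with hy | hy | hy <;>
    simp [Real.sign_of_neg, Real.sign_of_pos, hx, hy] at h ⊢ <;> norm_num at h
  exacts [div_nonneg_of_nonpos hy.le hx.le, div_nonneg hy.le hx.le]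

lemma exists_weights_of_mem_convexHull_triple {𝕜 E : Type*} [Field 𝕜] [LinearOrder 𝕜]
    [IsStrictOrderedRing 𝕜] [AddCommGroup E] [Module 𝕜 E] {a b c p : E}
    (hp : p ∈ convexHull 𝕜 {a, b, c}) :
    ∃ w₁ w₂ w₃ : 𝕜, 0 ≤ w₁ ∧ 0 ≤ w₂ ∧ 0 ≤ w₃ ∧ w₁ + w₂ + w₃ = 1 ∧
      w₁ • a + w₂ • b + w₃ • c = p := by
  rw [convexHull_insert (insert_nonempty b {c}), convexHull_pair, mem_convexJoin] at hp
  obtain ⟨_, rfl, q, ⟨u, v, hu, hv, huv, rfl⟩, s, t, hs, ht, hst, rfl⟩ := hp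
  refine ⟨s, t * u, t * v, hs, mul_nonneg ht hu, mul_nonneg ht hv, ?_, ?_⟩
  · linear_combination t * huv + hst
  · simp only [smul_add, mul_smul, add_assoc]

/-- Cramer's rule for barycentric coordinates in the plane. -/
lemma orientDet_smul_add (a b c p : Fin 2 → ℝ) :
    orientDet p b c • a + orientDet a p c • b + orientDet a b p • c = orientDet a b c • p := by
  funext i
  fin_cases i <;> simp [orientDet] <;> ring

lemma mem_convexHull_triple_iff_osign {a b c p : Fin 2 → ℝ} (hd : orientDet a b c ≠ 0)
    (h₁ : orientDet p b c ≠ 0) (h₂ : orientDet a p c ≠ 0) (h₃ : orientDet a b p ≠ 0) :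
    p ∈ convexHull ℝ {a, b, c} ↔
      osign a b c = osign p b c ∧ osign a b c = osign a p c ∧ osign a b c = osign a b p := by
  simp only [osign_eq_sign_orientDet]
  constructor
  · intro hp
    obtain ⟨w₁, w₂, w₃, hw₁, hw₂, hw₃, hsum, rfl⟩ := exists_weights_of_mem_convexHull_triple hp
    obtain rfl : w₁ = 1 - w₂ - w₃ := by linear_combination hsum
    have e₁ : orientDet ((1 - w₂ - w₃) • a + w₂ • b + w₃ • c) b c =
        (1 - w₂ - w₃) * orientDet a b c := by
      simp [orientDet]; ring
    have e₂ : orientDet a ((1 - w₂ - w₃) • a + w₂ • b + w₃ • c) c = w₂ * orientDet a b c := by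
      simp [orientDet]; ring
    have e₃ : orientDet a b ((1 - w₂ - w₃) • a + w₂ • b + w₃ • c) = w₃ * orientDet a b c := by
      simp [orientDet]; ring
    have hsign {w : ℝ} (hw : 0 ≤ w) (hne : w * orientDet a b c ≠ 0) :
        Real.sign (orientDet a b c) = Real.sign (w * orientDet a b c) :=
      (Real.sign_mul_of_pos (hw.lt_of_ne (by rintro rfl; simp at hne))).symm
    rw [e₁] at h₁ ⊢
    rw [e₂] at h₂ ⊢
    rw [e₃] at h₃ ⊢
    exact ⟨hsign hw₁ h₁, hsign hw₂ h₂, hsign hw₃ h₃⟩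
  · rintro ⟨s₁, s₂, s₃⟩
    have hsum : orientDet p b c + orientDet a p c + orientDet a b p = orientDet a b c := by
      unfold orientDet; ring
    refine mem_convexHull_of_exists_fintype
      ![orientDet p b c / orientDet a b c, orientDet a p c / orientDet a b c,
        orientDet a b p / orientDet a b c] ![a, b, c] (fun i => ?_) ?_ ?_ ?_
    · fin_cases i
      exacts [div_nonneg_of_sign_eq s₁, div_nonneg_of_sign_eq s₂, div_nonneg_of_sign_eq s₃]
    · simp [Fin.sum_univ_three, ← add_div, hsum, hd]
    · intro i; fin_cases i <;> simp
    · simp only [Fin.sum_univ_three, Matrix.cons_val_zero, Matrix.cons_val_one,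
        Matrix.cons_val_two, Matrix.tail_cons, Matrix.head_cons]
      rw [div_eq_inv_mul, div_eq_inv_mul, div_eq_inv_mul, mul_smul, mul_smul, mul_smul,
        ← smul_add, ← smul_add, orientDet_smul_add, inv_smul_smul₀ hd]

lemma GenPos.exists_triple_of_mem_convexHull {X S : Set (Fin 2 → ℝ)} (hX : GenPos X)
    (hSX : S ⊆ X) {p : Fin 2 → ℝ} (hpX : p ∈ X) (hpS : p ∉ S) (hp : p ∈ convexHull ℝ S) :
    ∃ a ∈ S, ∃ b ∈ S, ∃ c ∈ S, a ≠ b ∧ a ≠ c ∧ b ≠ c ∧ p ∈ convexHull ℝ {a, b, c} := by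
  rw [convexHull_eq_union] at hp
  obtain ⟨t, htS, hti, hpt⟩ := by simpa only [mem_iUnion, exists_prop] using hp
  have hcard : t.card ≤ 3 := by
    have := hti.card_le_finrank_succ
    have := Submodule.finrank_le (vectorSpan ℝ (range ((↑) : t → Fin 2 → ℝ)))
    simp only [Fintype.card_coe, Module.finrank_fin_fun] at *
    omega
  interval_cases h : t.card
  · simp [Finset.card_eq_zero.1 h] at hpt
  · obtain ⟨u, rfl⟩ := Finset.card_eq_one.1 h
    simp only [Finset.coe_singleton, convexHull_singleton, mem_singleton_iff] at hpt
    exact absurd (htS (by simp [hpt])) hpS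
  · obtain ⟨u, v, huv, rfl⟩ := Finset.card_eq_two.1 h
    simp only [Finset.coe_insert, Finset.coe_singleton, convexHull_pair] at hpt
    have hu : u ∈ S := htS (by simp)
    have hv : v ∈ S := htS (by simp)
    exact absurd (mem_segment_iff_wbtw.1 hpt).collinear (hX u (hSX hu) p hpX v (hSX hv)
      (hu.ne_of_notMem hpS) (hv.ne_of_notMem hpS).symm huv)
  · obtain ⟨a, b, c, hab, hac, hbc, rfl⟩ := Finset.card_eq_three.1 h
    exact ⟨a, htS (by simp), b, htS (by simp), c, htS (by simp), hab, hac, hbc,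
      by simpa using hpt⟩

namespace ConvexGeometry

variable (G : ConvexGeometry J)

lemma cl_subset_cl_of_subset_cl {A B : Set J} (h : A ⊆ G.cl B) : G.cl A ⊆ G.cl B :=
  (G.mono _ _ h).trans (G.idem B).le

lemma dependent_insert {T : Set J} {x : J} (hxT : x ∉ T) (hx : x ∈ G.cl T) :
    G.Dependent (insert x T) :=
  ⟨x, mem_insert x T, by rwa [insert_sdiff_self_of_notMem hxT]⟩

lemma exists_isCircuit_subset {D : Set J} (hD : G.Dependent D) : ∃ C ⊆ D, G.IsCircuit C := by
  obtain ⟨C, hCD, hC⟩ := exists_minimal_le_of_wellFoundedLT G.Dependent D hD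
  exact ⟨C, hCD, hC.1, fun E hEC hE => le_antisymm hEC (hC.2 hE hEC)⟩

lemma isCircuit_insert_of_minimal {Y : Set J} {x : J} (hmin : Minimal (fun Z => x ∈ G.cl Z) Y)
    (hxY : x ∉ Y) : G.IsCircuit (insert x Y) := by
  refine ⟨G.dependent_insert hxY hmin.1, fun D hD ⟨z, hzD, hz⟩ => ?_⟩
  by_cases hzx : z = x
  · -- root `x`: minimality of `Y` forces `D = Y ∪ {x}`
    subst hzx
    have hDY : D \ {z} ⊆ Y := fun w hw => (hD hw.1).resolve_left hw.2
    exact hD.antisymm (insert_subset hzD ((hmin.2 hz hDY).trans sdiff_subset))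
  · -- root `z ≠ x`: anti-exchange over `A = cl (Y \ {z})` is violated
    exfalso
    have hzY : z ∈ Y := (hD hzD).resolve_left hzx
    set A := G.cl (Y \ {z})
    have hxA : x ∉ A := fun hxA => (hmin.2 hxA sdiff_subset hzY).2 rfl
    have hYA : Y ⊆ A ∪ {z} := fun y hy =>
      (eq_or_ne y z).elim Or.inr fun hyz => Or.inl (G.extensive _ ⟨hy, hyz⟩)
    have hzA : z ∉ A := fun hzA =>
      hxA (G.cl_subset_cl_of_subset_cl (hYA.trans (union_subset subset_rfl
        (singleton_subset_iff.2 hzA))) hmin.1)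
    have hDA : D \ {z} ⊆ A ∪ {x} := fun w ⟨hwD, hwz⟩ =>
      (hD hwD).elim Or.inr fun hwY => Or.inl (G.extensive _ ⟨hwY, hwz⟩)
    exact G.antiExchange A (G.idem _) z x hzx hzA hxA (G.mono _ _ hDA hz) (G.mono _ _ hYA hmin.1)

namespace Is4Geometry

variable {G}

lemma isCircuit_of_dependent (h4 : G.Is4Geometry) {D : Set J} (hD : G.Dependent D)
    (hcard : D.ncard = 4) : G.IsCircuit D := by
  refine ⟨hD, fun E hED hE => ?_⟩
  obtain ⟨C, hCE, hC⟩ := G.exists_isCircuit_subset hE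
  have hCD : C = D := eq_of_subset_of_ncard_le (hCE.trans hED) (by rw [hcard, h4 C hC])
  exact hED.antisymm (hCD ▸ hCE)

lemma rt_iff_mem_cl (h4 : G.Is4Geometry) {T : Set J} {d : J} (hT : T.ncard = 3) (hdT : d ∉ T) :
    G.RT T d ↔ d ∈ G.cl T :=
  ⟨fun h => h.2.2, fun hd => ⟨hdT, h4.isCircuit_of_dependent (G.dependent_insert hdT hd)
    (by rw [ncard_insert_of_notMem hdT, hT]), hd⟩⟩

lemma exists_triple_of_mem_cl (h4 : G.Is4Geometry) {Y : Set J} {x : J} (hx : x ∈ G.cl Y)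
    (hxY : x ∉ Y) :
    ∃ a ∈ Y, ∃ b ∈ Y, ∃ c ∈ Y, a ≠ b ∧ a ≠ c ∧ b ≠ c ∧ x ∈ G.cl {a, b, c} := by
  obtain ⟨Z, hZY, hZ⟩ := exists_minimal_le_of_wellFoundedLT (fun Z => x ∈ G.cl Z) Y hx
  have hxZ : x ∉ Z := fun h => hxY (hZY h)
  have hcard := h4 _ (G.isCircuit_insert_of_minimal hZ hxZ)
  rw [ncard_insert_of_notMem hxZ] at hcard
  obtain ⟨a, b, c, hab, hac, hbc, rfl⟩ := ncard_eq_three.1 (by omega : Z.ncard = 3)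
  exact ⟨a, hZY (by simp), b, hZY (by simp), c, hZY (by simp), hab, hac, hbc, hZ.1⟩

end Is4Geometry

end ConvexGeometry

lemma mem_convexHull_iff_osign {ι : Type*} {f : ι → Fin 2 → ℝ} (hf : Function.Injective f)
    (hX : GenPos (range f)) {a b c d : ι}
    (hab : a ≠ b) (hac : a ≠ c) (had : a ≠ d) (hbc : b ≠ c) (hbd : b ≠ d) (hcd : c ≠ d) :
    f d ∈ convexHull ℝ {f a, f b, f c} ↔
      osign (f a) (f b) (f c) = osign (f d) (f b) (f c) ∧
      osign (f a) (f b) (f c) = osign (f a) (f d) (f c) ∧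
      osign (f a) (f b) (f c) = osign (f a) (f b) (f d) := by
  have hne {x y z : ι} (hxy : x ≠ y) (hyz : y ≠ z) (hxz : x ≠ z) :
      orientDet (f x) (f y) (f z) ≠ 0 :=
    hX.orientDet_ne_zero (mem_range_self x) (mem_range_self y) (mem_range_self z)
      (hf.ne hxy) (hf.ne hyz) (hf.ne hxz)
  exact mem_convexHull_triple_iff_osign (hne hab hbc hac) (hne hbd.symm hbc hcd.symm)
    (hne had hcd.symm hac) (hne hab hbd had)

lemma isRealization_iff_forall_mem_cl_triple {G : ConvexGeometry J} (h4 : G.Is4Geometry)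
    {f : J → Fin 2 → ℝ} (hf : Function.Injective f) (hX : GenPos (range f)) :
    IsRealization G f ↔ ∀ a b c d : J, a ≠ b → a ≠ c → a ≠ d → b ≠ c → b ≠ d → c ≠ d →
      (d ∈ G.cl {a, b, c} ↔ f d ∈ convexHull ℝ {f a, f b, f c}) := by
  constructor
  · intro hR a b c d _ _ _ _ _ _
    have h := hR.2.2 {a, b, c}
    simp only [image_insert_eq, image_singleton] at h
    rw [← hf.mem_set_image, h, mem_inter_iff, and_iff_left (mem_range_self d)]
  refine fun htri => ⟨hf, hX, fun Y => Subset.antisymm ?_ ?_⟩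
  · rintro _ ⟨x, hx, rfl⟩
    refine ⟨?_, mem_range_self x⟩
    by_cases hxY : x ∈ Y
    · exact subset_convexHull ℝ _ (mem_image_of_mem f hxY)
    obtain ⟨a, ha, b, hb, c, hc, hab, hac, hbc, habc⟩ := h4.exists_triple_of_mem_cl hx hxY
    refine convexHull_mono ?_ ((htri a b c x hab hac (ha.ne_of_notMem hxY) hbc
      (hb.ne_of_notMem hxY) (hc.ne_of_notMem hxY)).1 habc)
    simp only [insert_subset_iff, singleton_subset_iff]
    exact ⟨mem_image_of_mem f ha, mem_image_of_mem f hb, mem_image_of_mem f hc⟩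
  · rintro _ ⟨hx, x, rfl⟩
    by_cases hxY : x ∈ Y
    · exact mem_image_of_mem f (G.extensive Y hxY)
    obtain ⟨_, ⟨a, ha, rfl⟩, _, ⟨b, hb, rfl⟩, _, ⟨c, hc, rfl⟩, hab, hac, hbc, habc⟩ :=
      hX.exists_triple_of_mem_convexHull (image_subset_range f Y) (mem_range_self x)
        (hf.mem_set_image.not.2 hxY) hx
    refine mem_image_of_mem f (G.mono _ _ ?_ ((htri a b c x (ne_of_apply_ne f hab)
      (ne_of_apply_ne f hac) (ha.ne_of_notMem hxY) (ne_of_apply_ne f hbc)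
      (hb.ne_of_notMem hxY) (hc.ne_of_notMem hxY)).2 habc))
    simp only [insert_subset_iff, singleton_subset_iff]
    exact ⟨ha, hb, hc⟩

/-- A convex 4-geometry is realizable iff some injective map `f : J → ℝ²`
with image in general position translates rooted triangles into the corresponding
orientation equalities. -/
theorem realizable_iff_order_type (G : ConvexGeometry J) (h4 : G.Is4Geometry) :
    (∃ f : J → (Fin 2 → ℝ), IsRealization G f) ↔
    (∃ f : J → (Fin 2 → ℝ), Function.Injective f ∧ GenPos (Set.range f) ∧
      ∀ a b c d : J, a ≠ b → a ≠ c → a ≠ d → b ≠ c → b ≠ d → c ≠ d →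
        (G.RT ({a, b, c} : Set J) d ↔
          osign (f a) (f b) (f c) = osign (f d) (f b) (f c) ∧
          osign (f a) (f b) (f c) = osign (f a) (f d) (f c) ∧
          osign (f a) (f b) (f c) = osign (f a) (f b) (f d))) := by
  have hRT {a b c d : J} (hab : a ≠ b) (hac : a ≠ c) (had : a ≠ d) (hbc : b ≠ c) (hbd : b ≠ d)
      (hcd : c ≠ d) : G.RT {a, b, c} d ↔ d ∈ G.cl {a, b, c} :=
    h4.rt_iff_mem_cl (ncard_eq_three.2 ⟨a, b, c, hab, hac, hbc, rfl⟩)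
      (by simp [had.symm, hbd.symm, hcd.symm])
  constructor
  · rintro ⟨f, hR⟩
    have ⟨hf, hX, _⟩ := hR
    have htri := (isRealization_iff_forall_mem_cl_triple h4 hf hX).1 hR
    refine ⟨f, hf, hX, fun a b c d hab hac had hbc hbd hcd => ?_⟩
    rw [hRT hab hac had hbc hbd hcd, htri a b c d hab hac had hbc hbd hcd,
      mem_convexHull_iff_osign hf hX hab hac had hbc hbd hcd]
  · rintro ⟨f, hf, hX, horient⟩
    refine ⟨f, (isRealization_iff_forall_mem_cl_triple h4 hf hX).2
      fun a b c d hab hac had hbc hbd hcd => ?_⟩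
    rw [← hRT hab hac had hbc hbd hcd, horient a b c d hab hac had hbc hbd hcd,
      mem_convexHull_iff_osign hf hX hab hac had hbc hbd hcd]
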